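/- Let (W,S) be a Coxeter system, I, J ⊆ S, and u ∈ W. Then the double coset W_I u W_J has a unique element of minimal length v₀ and a unique element of maximal length v₁ (when W_I u W_J is finite), and W_I u W_J equals the Bruhat interval [v₀, v₁]. -/

import Mathlib

open CoxeterSystem List

variable {B W : Type*} [Group W] {M : CoxeterMatrix B}

namespace CoxeterBruhat

/-- One edge in the Bruhat graph: `v = t * u` for a reflection `t`, with `ℓ(u) < ℓ(v)`. -/
def Step (cs : CoxeterSystem M W) (u v : W) : Prop :=
  ∃ t : W, cs.IsReflection t ∧ v = t * u ∧ cs.length u < cs.length v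

/-- The Bruhat order, as the reflexive-transitive closure of `Step`. -/
def BruhatLE (cs : CoxeterSystem M W) : W → W → Prop :=
  Relation.ReflTransGen (Step cs)

/-- The standard parabolic subgroup generated by the simple reflections indexed by `I`. -/
def parabolic (cs : CoxeterSystem M W) (I : Set B) : Subgroup W :=
  Subgroup.closure (cs.simple '' I)

/-- The left descent set `D_L(w)`. -/
def leftDescents (cs : CoxeterSystem M W) (w : W) : Set B :=
  {i | cs.IsLeftDescent w i}

/-- The right descent set `D_R(w)`. -/
def rightDescents (cs : CoxeterSystem M W) (w : W) : Set B :=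
  {i | cs.IsRightDescent w i}

/-- The double coset `W_I u W_J` as a set. -/
def doubleCoset (cs : CoxeterSystem M W) (I J : Set B) (u : W) : Set W :=
  {v | ∃ x ∈ parabolic cs I, ∃ y ∈ parabolic cs J, v = x * u * y}

/-- The Bruhat coset `C_w(u) = W_{D_L(w)} u W_{D_R(w)}`. -/
def bCoset (cs : CoxeterSystem M W) (w u : W) : Set W :=
  doubleCoset cs (leftDescents cs w) (rightDescents cs w) u

/-- The lower Bruhat interval `B(w) = [e, w]`. -/
def lowerInterval (cs : CoxeterSystem M W) (w : W) : Set W :=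
  {v | BruhatLE cs v w}

/-- The support `S(v)` of `v`: simple reflections below `v` in Bruhat order. -/
def support (cs : CoxeterSystem M W) (v : W) : Set B :=
  {i | BruhatLE cs (cs.simple i) v}


/-!
`W` acts on `W × ℤˣ` by letting `s_i` conjugate the first coordinate and flip the sign exactly
over `s_i`; the sign by which `w` acts over a reflection `t` is `(-1)` to the number of
occurrences of `t` in the right inversion sequence of any word for `w`, and it is `-1` exactly when
`ℓ(wt) < ℓ(w)`. This gives the strong exchange property, hence the subword property of the Bruhat
order and with it the lifting property: if `s_i w < w` then `u ≤ w` implies `s_i u ≤ w`, and if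
`u < s_i u` then `u ≤ z` implies `u ≤ s_i z`, together with their mirror images on the right.

Consequently the element `v₀` of minimal length in `W_I u W_J`, which has no descents in `I` on the
left or in `J` on the right, lies below the whole double coset, and the element `v₁` of maximal
length, which has all of them, lies above it; both are therefore unique. Conversely, an element `v`
of `[v₀, v₁]` can be pushed up by ascents in `I` and `J` without leaving `[v₀, v₁]`, and once it has
none left it lies above `W_I v₀ W_J ∋ v₁`, so it is `v₁`; going back down, `v` lies in the double
coset.
-/
variable (cs : CoxeterSystem M W)

local prefix:100 "s" => cs.simple
local prefix:100 "π" => cs.wordProd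
local prefix:100 "ℓ" => cs.length
local prefix:100 "ris" => cs.rightInvSeq

section SignRepresentation

open scoped Classical

noncomputable def simplePerm (i : B) : Equiv.Perm (W × ℤˣ) :=
  Function.Involutive.toPerm
    (fun p => (s i * p.1 * s i, if p.1 = s i then -p.2 else p.2))
    (by
      rintro ⟨t, ε⟩
      by_cases h : t = s i <;> simp [h, mul_assoc, mul_eq_one_iff_eq_inv])

@[simp] lemma simplePerm_apply (i : B) (t : W) (ε : ℤˣ) :
    simplePerm cs i (t, ε) = (s i * t * s i, if t = s i then -ε else ε) := rfl

noncomputable def wordPerm (ω : List B) : Equiv.Perm (W × ℤˣ) := (ω.map (simplePerm cs)).prod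

lemma wordPerm_apply (ω : List B) (t : W) (ε : ℤˣ) :
    wordPerm cs ω (t, ε) = (π ω * t * (π ω)⁻¹, (-1) ^ (ris ω).count t * ε) := by
  induction ω generalizing t ε with
  | nil => simp [wordPerm]
  | cons i ω ih =>
    have hcons : wordPerm cs (i :: ω) = simplePerm cs i * wordPerm cs ω := List.prod_cons
    have hris : ris (i :: ω) = ((π ω)⁻¹ * s i * π ω) :: ris ω := rfl
    have hconj : π ω * t * (π ω)⁻¹ = s i ↔ t = (π ω)⁻¹ * s i * π ω := by
      constructor <;> intro h
      · rw [← h]; group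
      · rw [h]; group
    rw [hcons, Equiv.Perm.mul_apply, ih, simplePerm_apply, hris, List.count_cons, wordProd_cons,
      mul_inv_rev, inv_simple, hconj]
    refine Prod.ext (by group) ?_
    by_cases h : t = (π ω)⁻¹ * s i * π ω
    · simp [h, pow_succ]
    · simp [h, Ne.symm h]

lemma rightInvSeq_alternatingWord (i i' : B) (n : ℕ) :
    ris (alternatingWord i i' n) =
      ((List.range n).map fun k => (s i' * s i) ^ k * s i').reverse := by
  induction n generalizing i i' with
  | zero => rfl
  | succ n ih =>
    rw [alternatingWord_succ, rightInvSeq_concat, ih, List.range_succ_eq_map, List.map_cons,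
      List.reverse_cons, List.map_reverse, List.map_map, List.map_map, List.concat_eq_append]
    congr 3
    · funext k
      simp only [Function.comp_apply, MulAut.conj_apply, inv_simple, pow_succ', mul_assoc,
        ← mul_pow_mul]
    · simp

lemma even_count_rightInvSeq_alternatingWord (i i' : B) (t : W) :
    Even ((ris (alternatingWord i i' (2 * M i i'))).count t) := by
  have hperiod : ((fun k => (s i' * s i) ^ k * s i') ∘ (M i i' + ·)) =
      fun k => (s i' * s i) ^ k * s i' := by
    funext k
    simp [pow_add]
  rw [rightInvSeq_alternatingWord, List.count_reverse, two_mul, List.range_add, List.map_append,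
    List.count_append, List.map_map, hperiod]
  exact Even.add_self _

lemma wordPerm_alternatingWord (i i' : B) (m : ℕ) :
    wordPerm cs (alternatingWord i i' (2 * m)) = (simplePerm cs i * simplePerm cs i') ^ m := by
  induction m with
  | zero => rfl
  | succ m ih =>
    rw [mul_add_one, alternatingWord_succ', alternatingWord_succ', if_neg (by simp),
      if_pos (by simp), wordPerm, List.map_cons, List.map_cons, List.prod_cons, List.prod_cons,
      ← wordPerm, ih, pow_succ', mul_assoc]

lemma isLiftable_simplePerm : M.IsLiftable (simplePerm cs) := by
  intro i i'
  rw [← wordPerm_alternatingWord]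
  ext ⟨t, ε⟩ : 1
  rw [wordPerm_apply, (even_count_rightInvSeq_alternatingWord cs i i' t).neg_one_pow,
    prod_alternatingWord_eq_mul_pow]
  simp

noncomputable def signRep : W →* Equiv.Perm (W × ℤˣ) :=
  cs.lift ⟨simplePerm cs, isLiftable_simplePerm cs⟩

lemma signRep_simple (i : B) : signRep cs (s i) = simplePerm cs i :=
  cs.lift_apply_simple (isLiftable_simplePerm cs) i

lemma signRep_wordProd (ω : List B) : signRep cs (π ω) = wordPerm cs ω := by
  rw [wordProd, map_list_prod, List.map_map, wordPerm]
  congr 2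
  funext i
  exact signRep_simple cs i

noncomputable def sign (w t : W) : ℤˣ := (signRep cs w (t, 1)).2

lemma sign_wordProd (ω : List B) (t : W) : sign cs (π ω) t = (-1) ^ (ris ω).count t := by
  simp [sign, signRep_wordProd, wordPerm_apply]

lemma signRep_apply (w t : W) (ε : ℤˣ) : signRep cs w (t, ε) = (w * t * w⁻¹, sign cs w t * ε) := by
  obtain ⟨ω, rfl⟩ := cs.wordProd_surjective w
  rw [signRep_wordProd, wordPerm_apply, sign_wordProd]

lemma sign_mul (u v t : W) : sign cs (u * v) t = sign cs u (v * t * v⁻¹) * sign cs v t := by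
  rw [sign, map_mul, Equiv.Perm.mul_apply, signRep_apply cs v, signRep_apply cs u, mul_one]

lemma sign_one (t : W) : sign cs 1 t = 1 := by
  simp [sign]

lemma sign_simple_self (i : B) : sign cs (s i) (s i) = -1 := by
  simp [sign, signRep_simple]

lemma sign_self {t : W} (ht : cs.IsReflection t) : sign cs t t = -1 := by
  obtain ⟨w, i, rfl⟩ := ht
  have hconj : w⁻¹ * (w * s i * w⁻¹) * w = s i := by group
  have hcancel := sign_mul cs w w⁻¹ (w * s i * w⁻¹)
  rw [mul_inv_cancel, sign_one, inv_inv, hconj] at hcancel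
  have hsimple := sign_mul cs w (s i) (s i)
  rw [sign_simple_self, mul_inv_cancel_right] at hsimple
  rw [sign_mul, inv_inv, hconj, hsimple, mul_neg_one, neg_mul, ← hcancel]

lemma mem_rightInvSeq_of_sign_eq_neg_one {ω : List B} {t : W} (h : sign cs (π ω) t = -1) :
    t ∈ ris ω := by
  rw [sign_wordProd] at h
  by_contra hmem
  rw [List.count_eq_zero.mpr hmem, pow_zero] at h
  exact absurd h (by decide)

lemma sign_eq_neg_one_of_isRightInversion {w t : W} (h : cs.IsRightInversion w t) :
    sign cs w t = -1 := by
  obtain ⟨ht, hlt⟩ := h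
  refine (Int.units_eq_one_or _).resolve_left fun hone => ?_
  have hwt : sign cs (w * t) t = -1 := by
    rw [sign_mul, mul_inv_cancel_right, hone, one_mul, sign_self cs ht]
  obtain ⟨ω, hred, hω⟩ := cs.exists_isReduced (w * t)
  rw [hω] at hwt
  have hinv :=
    cs.isRightInversion_of_mem_rightInvSeq hred (mem_rightInvSeq_of_sign_eq_neg_one cs hwt)
  rw [← hω] at hinv
  have hdesc : ℓ (w * t * t) < ℓ (w * t) := hinv.2
  rw [mul_assoc, ht.mul_self, mul_one] at hdesc
  exact hlt.asymm hdesc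

end SignRepresentation

variable {cs}

/-- The strong exchange property. -/
theorem exists_eraseIdx_of_isRightInversion {w t : W} (h : cs.IsRightInversion w t) {ω : List B}
    (hω : π ω = w) : ∃ j < ω.length, π (ω.eraseIdx j) = w * t := by
  subst hω
  obtain ⟨j, hj, rfl⟩ := List.getElem_of_mem
    (mem_rightInvSeq_of_sign_eq_neg_one cs (sign_eq_neg_one_of_isRightInversion cs h))
  refine ⟨j, by simpa using hj, ?_⟩
  rw [← wordProd_mul_getD_rightInvSeq, List.getD_eq_getElem]

lemma Step.exists_eraseIdx {b c : W} (h : Step cs b c) {ω : List B} (hω : π ω = c) :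
    ∃ j < ω.length, π (ω.eraseIdx j) = b := by
  obtain ⟨t, ht, rfl, hlt⟩ := h
  have hb : t * b * (b⁻¹ * t * b) = b := by
    simp only [mul_assoc, mul_inv_cancel_left]
    rw [← mul_assoc, ht.mul_self, one_mul]
  have hinv : cs.IsRightInversion (t * b) (b⁻¹ * t * b) := by
    refine ⟨by simpa using ht.conj b⁻¹, by rwa [hb]⟩
  simpa only [hb] using exists_eraseIdx_of_isRightInversion hinv hω

@[refl] protected lemma BruhatLE.refl (w : W) : BruhatLE cs w w := Relation.ReflTransGen.refl

protected lemma BruhatLE.trans {u v w : W} (h₁ : BruhatLE cs u v) (h₂ : BruhatLE cs v w) :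
    BruhatLE cs u w :=
  Relation.ReflTransGen.trans h₁ h₂

lemma Step.bruhatLE {u v : W} (h : Step cs u v) : BruhatLE cs u v := Relation.ReflTransGen.single h

lemma BruhatLE.length_le {u v : W} (h : BruhatLE cs u v) : ℓ u ≤ ℓ v := by
  induction h with
  | refl => rfl
  | tail _ hstep ih => obtain ⟨_, _, _, hlt⟩ := hstep; omega

lemma BruhatLE.eq_of_length_le {u v : W} (h : BruhatLE cs u v) (hl : ℓ v ≤ ℓ u) : u = v := by
  rcases Relation.ReflTransGen.cases_tail h with rfl | ⟨c, hc, _, _, _, hlt⟩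
  · rfl
  · have := BruhatLE.length_le hc
    omega

lemma BruhatLE.inv {u v : W} (h : BruhatLE cs u v) : BruhatLE cs u⁻¹ v⁻¹ := by
  induction h with
  | refl => rfl
  | @tail b _ _ hstep ih =>
    obtain ⟨t, ht, rfl, hlt⟩ := hstep
    refine ih.trans (Step.bruhatLE ⟨_, ht.conj b⁻¹, ?_, by rwa [cs.length_inv, cs.length_inv]⟩)
    rw [mul_inv_rev, ht.inv]
    group

lemma bruhatLE_inv_iff {u v : W} : BruhatLE cs u⁻¹ v⁻¹ ↔ BruhatLE cs u v :=
  ⟨fun h => by simpa using h.inv, BruhatLE.inv⟩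

lemma bruhatLE_simple_mul {w : W} {i : B} (h : ¬cs.IsLeftDescent w i) : BruhatLE cs w (s i * w) :=
  Step.bruhatLE ⟨s i, cs.isReflection_simple i, rfl, by
    rw [not_isLeftDescent_iff] at h; omega⟩

lemma simple_mul_bruhatLE {w : W} {i : B} (h : cs.IsLeftDescent w i) : BruhatLE cs (s i * w) w :=
  Step.bruhatLE ⟨s i, cs.isReflection_simple i, (cs.simple_mul_simple_cancel_left i).symm, h⟩

lemma bruhatLE_mul_simple {w : W} {j : B} (h : ¬cs.IsRightDescent w j) :
    BruhatLE cs w (w * s j) := by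
  rw [← cs.isLeftDescent_inv_iff] at h
  simpa [← bruhatLE_inv_iff (v := w * s j)] using bruhatLE_simple_mul h

lemma BruhatLE.exists_sublist {u w : W} (h : BruhatLE cs u w) {ω : List B} (hω : π ω = w) :
    ∃ ω', ω' <+ ω ∧ π ω' = u := by
  induction h generalizing ω with
  | refl => exact ⟨ω, List.Sublist.refl ω, hω⟩
  | tail _ hstep ih =>
    obtain ⟨j, -, hj⟩ := hstep.exists_eraseIdx hω
    obtain ⟨ω', hsub, hω'⟩ := ih hj
    exact ⟨ω', hsub.trans (List.eraseIdx_sublist ω j), hω'⟩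

lemma exists_isReduced_cons_of_isLeftDescent {w : W} {i : B} (h : cs.IsLeftDescent w i) :
    ∃ τ, cs.IsReduced (i :: τ) ∧ π (i :: τ) = w := by
  obtain ⟨τ, hτ, hτw⟩ := cs.exists_isReduced (s i * w)
  have hw : π (i :: τ) = w := by rw [wordProd_cons, ← hτw, simple_mul_simple_cancel_left]
  refine ⟨τ, ?_, hw⟩
  rw [isLeftDescent_iff, hτw] at h
  rw [CoxeterSystem.IsReduced, hw, ← h, hτ, List.length_cons]

section SubwordProperty

variable (cs)

def LiftsAt (w : W) : Prop :=
  ∀ u i, BruhatLE cs u w → BruhatLE cs (s i * u) w ∨ BruhatLE cs (s i * u) (s i * w)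

def SubwordClosed (ω : List B) : Prop := ∀ ω', ω' <+ ω → BruhatLE cs (π ω') (π ω)

variable {cs}

lemma Step.simple_mul_bruhatLE_or {v w : W} (hvw : Step cs v w) (i : B)
    (hsub : ∀ τ, cs.IsReduced τ → τ.length < ℓ w → SubwordClosed cs τ) :
    BruhatLE cs (s i * v) w ∨ BruhatLE cs (s i * v) (s i * w) := by
  by_cases hw : cs.IsLeftDescent w i
  · obtain ⟨τ, hτ, hτw⟩ := exists_isReduced_cons_of_isLeftDescent hw
    obtain ⟨j, -, hj⟩ := hvw.exists_eraseIdx hτw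
    rw [← hτw, wordProd_cons, simple_mul_simple_cancel_left]
    cases j with
    | zero =>
      left
      rw [← hj, List.eraseIdx_cons_zero]
    | succ k =>
      right
      rw [← hj, List.eraseIdx_cons_succ, wordProd_cons, simple_mul_simple_cancel_left]
      have hτ' : cs.IsReduced τ := by simpa using hτ.drop 1
      refine hsub τ hτ' ?_ _ (List.eraseIdx_sublist τ k)
      rw [← hτw, hτ, List.length_cons]
      exact Nat.lt_succ_self _
  · right
    obtain ⟨t, ht, rfl, hlt⟩ := hvw
    refine Step.bruhatLE ⟨s i * t * (s i)⁻¹, ht.conj _, by group, ?_⟩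
    rw [not_isLeftDescent_iff] at hw
    rcases cs.length_simple_mul v i with h | h <;> omega

lemma liftsAt_of_lt {w : W} (hlift : ∀ v, ℓ v < ℓ w → LiftsAt cs v)
    (hsub : ∀ τ, cs.IsReduced τ → τ.length < ℓ w → SubwordClosed cs τ) : LiftsAt cs w := by
  intro u i huw
  rcases Relation.ReflTransGen.cases_tail huw with rfl | ⟨v, huv, hvw⟩
  · exact Or.inr (.refl _)
  have hv : ℓ v < ℓ w := by obtain ⟨_, _, _, hlt⟩ := hvw; exact hlt
  rcases hlift v hv u i huv with h | h
  · exact Or.inl (h.trans hvw.bruhatLE)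
  · exact (hvw.simple_mul_bruhatLE_or i hsub).imp h.trans h.trans

lemma subwordClosed_of_lt {ω : List B} (hω : cs.IsReduced ω)
    (hlift : ∀ v, ℓ v < ω.length → LiftsAt cs v)
    (hsub : ∀ τ, cs.IsReduced τ → τ.length < ω.length → SubwordClosed cs τ) :
    SubwordClosed cs ω := by
  intro ω' hω'
  cases ω with
  | nil => rw [List.sublist_nil.mp hω']
  | cons a l =>
    have hl : cs.IsReduced l := by simpa using hω.drop 1
    have hlen : l.length < (a :: l).length := Nat.lt_succ_self _
    have hup : ¬cs.IsLeftDescent (π l) a := by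
      rw [not_isLeftDescent_iff, ← wordProd_cons, hω, hl, List.length_cons]
    rw [wordProd_cons]
    rcases List.sublist_cons_iff.mp hω' with h | ⟨r, rfl, h⟩
    · exact (hsub l hl hlen ω' h).trans (bruhatLE_simple_mul hup)
    · rw [wordProd_cons]
      rcases hlift (π l) (by rwa [hl]) (π r) a (hsub l hl hlen r h) with h' | h'
      · exact h'.trans (bruhatLE_simple_mul hup)
      · exact h'

lemma liftsAt_and_subwordClosed (n : ℕ) :
    (∀ w, ℓ w = n → LiftsAt cs w) ∧ (∀ ω, cs.IsReduced ω → ω.length = n → SubwordClosed cs ω) := by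
  induction n using Nat.strong_induction_on with
  | _ n ih =>
    refine ⟨fun w hw => liftsAt_of_lt ?_ ?_, fun ω hω hlen => subwordClosed_of_lt hω ?_ ?_⟩
    · exact fun v hv => (ih _ (hw ▸ hv)).1 v rfl
    · exact fun τ hτ hlt => (ih _ (hw ▸ hlt)).2 τ hτ rfl
    · exact fun v hv => (ih _ (hlen ▸ hv)).1 v rfl
    · exact fun τ hτ hlt => (ih _ (hlen ▸ hlt)).2 τ hτ rfl

end SubwordProperty

/-- One half of the subword property; `BruhatLE.exists_sublist` is the other. -/
theorem bruhatLE_of_sublist {ω ω' : List B} (hω : cs.IsReduced ω) (h : ω' <+ ω) :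
    BruhatLE cs (π ω') (π ω) :=
  (liftsAt_and_subwordClosed ω.length).2 ω hω rfl ω' h

theorem BruhatLE.simple_mul_of_isLeftDescent {u w : W} {i : B} (hw : cs.IsLeftDescent w i)
    (h : BruhatLE cs u w) : BruhatLE cs (s i * u) w := by
  obtain ⟨τ, hτ, rfl⟩ := exists_isReduced_cons_of_isLeftDescent hw
  obtain ⟨ω', hω', rfl⟩ := h.exists_sublist rfl
  rcases List.sublist_cons_iff.mp hω' with h' | ⟨r, rfl, h'⟩
  · rw [← wordProd_cons]
    exact bruhatLE_of_sublist hτ (h'.cons_cons i)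
  · rw [wordProd_cons, simple_mul_simple_cancel_left]
    exact bruhatLE_of_sublist hτ (h'.cons i)

theorem BruhatLE.le_simple_mul_of_not_isLeftDescent {u z : W} {i : B}
    (hu : ¬cs.IsLeftDescent u i) (h : BruhatLE cs u z) : BruhatLE cs u (s i * z) := by
  by_cases hz : cs.IsLeftDescent z i
  swap
  · exact h.trans (bruhatLE_simple_mul hz)
  obtain ⟨τ, hτ, rfl⟩ := exists_isReduced_cons_of_isLeftDescent hz
  obtain ⟨ω', hω', rfl⟩ := h.exists_sublist rfl
  have hτ' : cs.IsReduced τ := by simpa using hτ.drop 1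
  rw [wordProd_cons, simple_mul_simple_cancel_left]
  rcases List.sublist_cons_iff.mp hω' with h' | ⟨r, rfl, h'⟩
  · exact bruhatLE_of_sublist hτ' h'
  · rw [wordProd_cons] at hu ⊢
    have hr : BruhatLE cs (s i * π r) (π r) := by
      simpa using bruhatLE_simple_mul hu
    exact hr.trans (bruhatLE_of_sublist hτ' h')

theorem BruhatLE.mul_simple_of_isRightDescent {u w : W} {j : B} (hw : cs.IsRightDescent w j)
    (h : BruhatLE cs u w) : BruhatLE cs (u * s j) w := by
  rw [← cs.isLeftDescent_inv_iff] at hw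
  simpa [← bruhatLE_inv_iff (u := u * s j)] using h.inv.simple_mul_of_isLeftDescent hw

theorem BruhatLE.le_mul_simple_of_not_isRightDescent {u z : W} {j : B}
    (hu : ¬cs.IsRightDescent u j) (h : BruhatLE cs u z) : BruhatLE cs u (z * s j) := by
  rw [← cs.isLeftDescent_inv_iff] at hu
  simpa [← bruhatLE_inv_iff (v := z * s j)] using h.inv.le_simple_mul_of_not_isLeftDescent hu

section DoubleCoset

variable {I J : Set B}

lemma simple_mem_parabolic {i : B} (hi : i ∈ I) : s i ∈ parabolic cs I :=
  Subgroup.subset_closure ⟨i, hi, rfl⟩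

variable (cs I J) in
lemma mem_doubleCoset_self (u : W) : u ∈ doubleCoset cs I J u :=
  ⟨1, one_mem _, 1, one_mem _, by simp⟩

lemma simple_mul_mem_doubleCoset {u v : W} {i : B} (hi : i ∈ I) (hv : v ∈ doubleCoset cs I J u) :
    s i * v ∈ doubleCoset cs I J u := by
  obtain ⟨x, hx, y, hy, rfl⟩ := hv
  exact ⟨s i * x, mul_mem (simple_mem_parabolic hi) hx, y, hy, by group⟩

lemma mul_simple_mem_doubleCoset {u v : W} {j : B} (hj : j ∈ J) (hv : v ∈ doubleCoset cs I J u) :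
    v * s j ∈ doubleCoset cs I J u := by
  obtain ⟨x, hx, y, hy, rfl⟩ := hv
  exact ⟨x, hx, y * s j, mul_mem hy (simple_mem_parabolic hj), by group⟩

lemma doubleCoset_eq_of_mem {u v : W} (hv : v ∈ doubleCoset cs I J u) :
    doubleCoset cs I J u = doubleCoset cs I J v := by
  obtain ⟨x₀, hx₀, y₀, hy₀, rfl⟩ := hv
  ext z
  constructor
  · rintro ⟨x, hx, y, hy, rfl⟩
    exact ⟨x * x₀⁻¹, mul_mem hx (inv_mem hx₀), y₀⁻¹ * y, mul_mem (inv_mem hy₀) hy, by group⟩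
  · rintro ⟨x, hx, y, hy, rfl⟩
    exact ⟨x * x₀, mul_mem hx hx₀, y₀ * y, mul_mem hy₀ hy, by group⟩

theorem doubleCoset_induction {P : W → Prop} (hI : ∀ i ∈ I, ∀ v, P v → P (s i * v))
    (hJ : ∀ j ∈ J, ∀ v, P v → P (v * s j)) {u : W} (hu : P u) :
    ∀ v ∈ doubleCoset cs I J u, P v := by
  rintro _ ⟨x, hx, y, hy, rfl⟩
  induction hx using Subgroup.closure_induction_left with
  | one =>
    rw [one_mul]
    induction hy using Subgroup.closure_induction_right with
    | one => rwa [mul_one]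
    | mul_right y _ _ hj ih =>
      obtain ⟨j, hj, rfl⟩ := hj
      rw [← mul_assoc]
      exact hJ j hj _ ih
    | mul_inv_cancel y _ _ hj ih =>
      obtain ⟨j, hj, rfl⟩ := hj
      rw [inv_simple, ← mul_assoc]
      exact hJ j hj _ ih
  | mul_left _ hi x _ ih =>
    obtain ⟨i, hi, rfl⟩ := hi
    rw [mul_assoc, mul_assoc, ← mul_assoc x]
    exact hI i hi _ ih
  | inv_mul_cancel _ hi x _ ih =>
    obtain ⟨i, hi, rfl⟩ := hi
    rw [inv_simple, mul_assoc, mul_assoc, ← mul_assoc x]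
    exact hI i hi _ ih

theorem bruhatLE_of_mem_doubleCoset_of_ascents {m : W} (hI : ∀ i ∈ I, ¬cs.IsLeftDescent m i)
    (hJ : ∀ j ∈ J, ¬cs.IsRightDescent m j) : ∀ v ∈ doubleCoset cs I J m, BruhatLE cs m v :=
  doubleCoset_induction (fun i hi _ h => h.le_simple_mul_of_not_isLeftDescent (hI i hi))
    (fun j hj _ h => h.le_mul_simple_of_not_isRightDescent (hJ j hj)) (.refl m)

theorem bruhatLE_of_mem_doubleCoset_of_descents {v z : W} (hI : ∀ i ∈ I, cs.IsLeftDescent v i)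
    (hJ : ∀ j ∈ J, cs.IsRightDescent v j) (hz : BruhatLE cs z v) :
    ∀ w ∈ doubleCoset cs I J z, BruhatLE cs w v :=
  doubleCoset_induction (fun i hi _ h => h.simple_mul_of_isLeftDescent (hI i hi))
    (fun j hj _ h => h.mul_simple_of_isRightDescent (hJ j hj)) hz

theorem mem_doubleCoset_of_bruhatLE {m v v₁ : W} (hI : ∀ i ∈ I, cs.IsLeftDescent v₁ i)
    (hJ : ∀ j ∈ J, cs.IsRightDescent v₁ j) (hm : m ∈ doubleCoset cs I J v₁)
    (hmv : BruhatLE cs m v) (hvv₁ : BruhatLE cs v v₁) : v ∈ doubleCoset cs I J v₁ := by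
  by_cases hleft : ∃ i ∈ I, ¬cs.IsLeftDescent v i
  · obtain ⟨i, hi, hv⟩ := hleft
    have hle : BruhatLE cs (s i * v) v₁ := hvv₁.simple_mul_of_isLeftDescent (hI i hi)
    -- `hlen` and `hlen₁` show that the termination measure `ℓ v₁ - ℓ v` decreases
    have hlen : ℓ (s i * v) = ℓ v + 1 := cs.not_isLeftDescent_iff.mp hv
    have hlen₁ := hle.length_le
    simpa using simple_mul_mem_doubleCoset hi
      (mem_doubleCoset_of_bruhatLE hI hJ hm (hmv.trans (bruhatLE_simple_mul hv)) hle)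
  by_cases hright : ∃ j ∈ J, ¬cs.IsRightDescent v j
  · obtain ⟨j, hj, hv⟩ := hright
    have hle : BruhatLE cs (v * s j) v₁ := hvv₁.mul_simple_of_isRightDescent (hJ j hj)
    have hlen : ℓ (v * s j) = ℓ v + 1 := cs.not_isRightDescent_iff.mp hv
    have hlen₁ := hle.length_le
    simpa using mul_simple_mem_doubleCoset hj
      (mem_doubleCoset_of_bruhatLE hI hJ hm (hmv.trans (bruhatLE_mul_simple hv)) hle)
  push Not at hleft hright
  have hv₁ : v₁ ∈ doubleCoset cs I J m := doubleCoset_eq_of_mem hm ▸ mem_doubleCoset_self cs I J v₁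
  have hv₁v := bruhatLE_of_mem_doubleCoset_of_descents hleft hright hmv v₁ hv₁
  rw [hvv₁.eq_of_length_le hv₁v.length_le]
  exact mem_doubleCoset_self cs I J v₁
termination_by cs.length v₁ - cs.length v

lemma not_isLeftDescent_of_length_minimal {u m : W} {i : B} (hm : m ∈ doubleCoset cs I J u)
    (hmin : ∀ v ∈ doubleCoset cs I J u, ℓ m ≤ ℓ v) (hi : i ∈ I) : ¬cs.IsLeftDescent m i :=
  (hmin _ (simple_mul_mem_doubleCoset hi hm)).not_gt

lemma not_isRightDescent_of_length_minimal {u m : W} {j : B} (hm : m ∈ doubleCoset cs I J u)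
    (hmin : ∀ v ∈ doubleCoset cs I J u, ℓ m ≤ ℓ v) (hj : j ∈ J) : ¬cs.IsRightDescent m j :=
  (hmin _ (mul_simple_mem_doubleCoset hj hm)).not_gt

lemma isLeftDescent_of_length_maximal {u m : W} {i : B} (hm : m ∈ doubleCoset cs I J u)
    (hmax : ∀ v ∈ doubleCoset cs I J u, ℓ v ≤ ℓ m) (hi : i ∈ I) : cs.IsLeftDescent m i :=
  (hmax _ (simple_mul_mem_doubleCoset hi hm)).lt_of_ne (cs.length_simple_mul_ne m i)

lemma isRightDescent_of_length_maximal {u m : W} {j : B} (hm : m ∈ doubleCoset cs I J u)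
    (hmax : ∀ v ∈ doubleCoset cs I J u, ℓ v ≤ ℓ m) (hj : j ∈ J) : cs.IsRightDescent m j :=
  (hmax _ (mul_simple_mem_doubleCoset hj hm)).lt_of_ne (cs.length_mul_simple_ne m j)

end DoubleCoset

/-- A finite double coset `W_I u W_J` has a unique minimal-length element `v₀` and a unique
maximal-length element `v₁`, and it equals the Bruhat interval `[v₀, v₁]`. -/
theorem doubleCoset_eq_interval (cs : CoxeterSystem M W) (I J : Set B) (u : W)
    (hfin : (doubleCoset cs I J u).Finite) :
    ∃ v₀ v₁ : W,
      (v₀ ∈ doubleCoset cs I J u ∧ ∀ v ∈ doubleCoset cs I J u, cs.length v₀ ≤ cs.length v) ∧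
      (∀ v₀' , v₀' ∈ doubleCoset cs I J u →
        (∀ v ∈ doubleCoset cs I J u, cs.length v₀' ≤ cs.length v) → v₀' = v₀) ∧
      (v₁ ∈ doubleCoset cs I J u ∧ ∀ v ∈ doubleCoset cs I J u, cs.length v ≤ cs.length v₁) ∧
      (∀ v₁' , v₁' ∈ doubleCoset cs I J u →
        (∀ v ∈ doubleCoset cs I J u, cs.length v ≤ cs.length v₁') → v₁' = v₁) ∧
      doubleCoset cs I J u = {v | BruhatLE cs v₀ v ∧ BruhatLE cs v v₁} := by
  have hne : (doubleCoset cs I J u).Nonempty := ⟨u, mem_doubleCoset_self cs I J u⟩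
  obtain ⟨v₀, hv₀, hmin⟩ := Set.exists_min_image _ cs.length hfin hne
  obtain ⟨v₁, hv₁, hmax⟩ := Set.exists_max_image _ cs.length hfin hne
  have hI₁ := fun i => isLeftDescent_of_length_maximal (i := i) hv₁ hmax
  have hJ₁ := fun j => isRightDescent_of_length_maximal (j := j) hv₁ hmax
  have hlow : ∀ v ∈ doubleCoset cs I J u, BruhatLE cs v₀ v := doubleCoset_eq_of_mem hv₀ ▸
    bruhatLE_of_mem_doubleCoset_of_ascents (fun i => not_isLeftDescent_of_length_minimal hv₀ hmin)
      (fun j => not_isRightDescent_of_length_minimal hv₀ hmin)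
  have hup : ∀ v ∈ doubleCoset cs I J u, BruhatLE cs v v₁ := doubleCoset_eq_of_mem hv₁ ▸
    bruhatLE_of_mem_doubleCoset_of_descents hI₁ hJ₁ (.refl v₁)
  refine ⟨v₀, v₁, ⟨hv₀, hmin⟩, fun v hv hv' => ((hlow v hv).eq_of_length_le (hv' v₀ hv₀)).symm,
    ⟨hv₁, hmax⟩, fun v hv hv' => (hup v hv).eq_of_length_le (hv' v₁ hv₁), ?_⟩
  ext v
  refine ⟨fun hv => ⟨hlow v hv, hup v hv⟩, fun ⟨h₀, h₁⟩ => ?_⟩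
  rw [doubleCoset_eq_of_mem hv₁] at hv₀ ⊢
  exact mem_doubleCoset_of_bruhatLE hI₁ hJ₁ hv₀ h₀ h₁

end CoxeterBruhat
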